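/- Let g ∈ A be a unit and λ ∈ K with Tᵢ(g) = λ·g for all 1 ≤ i ≤ n−1, and suppose T_n(g) = (b + w·X_n⁻¹)·g for some w ∈ {u, −v}. Then g is an eigenvector of T₀; more precisely T₀(g) = (u·w·Q⁻¹)·g, so T₀(g) = (u·v⁻¹)·g if w = u, and T₀(g) = −g if w = −v. -/

import Mathlib

/-!
Put `Y_j = X_j⁻¹ g`. The hypothesis on `T_n` gives `T_n⁻¹ g = Q⁻¹ w Y_n`. For `i < n`, the
Bernstein relation with `h = X_{i+1}⁻¹` gives `T_i⁻¹ Y_{i+1} = τ⁻¹ λ Y_i`, while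
`T_i⁻¹ g = τ⁻¹ (λ - τ + 1) g`, and `λ (λ - τ + 1) = τ` by the quadratic relation. Hence
conjugating by `T_i⁻¹` turns an operator sending `g` to `c Y_{i+1}` into one sending `g` to
`τ⁻¹ c Y_i`. After the `n - 1` conjugations the sandwich sends `g` to `τ^{1-n} Q⁻¹ w Y_1`, and
`u τ^{n-1} X_1` turns this into `u w Q⁻¹ g`.
-/

open AddMonoidAlgebra

/-- The Laurent polynomial ring `K[X₁^{±1},…,X_n^{±1}]` in `n` variables,
realized as the monoid algebra of `ℤⁿ` over `K`. -/
abbrev LPn (K : Type*) [Field K] (n : ℕ) := AddMonoidAlgebra K (Fin n → ℤ)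

/-- The variable `Xᵢ`. -/
noncomputable def Xv {K : Type*} [Field K] {n : ℕ} (i : Fin n) : LPn K n :=
  of' K (Fin n → ℤ) (Pi.single i 1)

/-- The inverse variable `Xᵢ⁻¹`. -/
noncomputable def XvInv {K : Type*} [Field K] {n : ℕ} (i : Fin n) : LPn K n :=
  of' K (Fin n → ℤ) (Pi.single i (-1))

/-- The `K`-algebra automorphism of `LPn K n` swapping the variables `Xᵢ` and `Xⱼ`. -/
noncomputable def swapAlg (K : Type*) [Field K] {n : ℕ} (i j : Fin n) :
    LPn K n ≃ₐ[K] LPn K n :=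
  AddMonoidAlgebra.domCongr K K
    (AddEquiv.arrowCongr (Equiv.swap i j) (AddEquiv.refl ℤ))

/-- The additive automorphism of `ℤⁿ` negating the `m`-th coordinate. -/
def negCoord {n : ℕ} (m : Fin n) : (Fin n → ℤ) ≃+ (Fin n → ℤ) where
  toFun f := fun k => if k = m then -f k else f k
  invFun f := fun k => if k = m then -f k else f k
  left_inv f := by funext k; by_cases h : k = m <;> simp [h]
  right_inv f := by funext k; by_cases h : k = m <;> simp [h]
  map_add' f g := by
    funext k; by_cases h : k = m <;> simp [h] <;> ring

/-- The `K`-algebra automorphism `h ↦ h∨` of `LPn K n` sending `X_m` to `X_m⁻¹`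
and fixing the other variables. -/
noncomputable def veeAlg (K : Type*) [Field K] {n : ℕ} (m : Fin n) :
    LPn K n ≃ₐ[K] LPn K n :=
  AddMonoidAlgebra.domCongr K K (negCoord m)

/-- `Tᵢ⁻¹ = τ⁻¹·(Tᵢ − (τ−1)·id)`. -/
noncomputable def TInvA {K : Type*} [Field K] {n : ℕ} (τ : K)
    (S : Module.End K (LPn K n)) : Module.End K (LPn K n) :=
  τ⁻¹ • (S - (τ - 1) • LinearMap.id)

/-- `T_n⁻¹ = Q⁻¹·(T_n − b·id)` where `b = Q − 1`. -/
noncomputable def TInvC {K : Type*} [Field K] {n : ℕ} (Q : K)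
    (S : Module.End K (LPn K n)) : Module.End K (LPn K n) :=
  Q⁻¹ • (S - (Q - 1) • LinearMap.id)

/-- The composition `T_{n-1-j}⁻¹ ∘ ⋯ ∘ T_{n-1}⁻¹ ∘ T_n⁻¹ ∘ T_{n-1}⁻¹ ∘ ⋯ ∘ T_{n-1-j}⁻¹`
(with `T_n⁻¹` in the middle); `midChain n τ Q Ti Tn (n-1)` is the full sandwich
`T₁⁻¹ ∘ ⋯ ∘ T_{n-1}⁻¹ ∘ T_n⁻¹ ∘ T_{n-1}⁻¹ ∘ ⋯ ∘ T₁⁻¹`. -/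
noncomputable def midChain {K : Type*} [Field K] {n : ℕ} (τ Q : K)
    (Ti : ℕ → Module.End K (LPn K n)) (Tn : Module.End K (LPn K n)) :
    ℕ → Module.End K (LPn K n)
  | 0 => TInvC Q Tn
  | j + 1 =>
      TInvA τ (Ti (n - 1 - j)) ∘ₗ midChain τ Q Ti Tn j ∘ₗ TInvA τ (Ti (n - 1 - j))
/-- The operator `T₀ := u·τ^{n−1}·(multiplication by X₁) ∘ T₁⁻¹∘⋯∘T_{n-1}⁻¹∘T_n⁻¹∘T_{n-1}⁻¹∘⋯∘T₁⁻¹`. -/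
noncomputable def T0op {K : Type*} [Field K] {n : ℕ} (hn : 0 < n) (τ u v : K)
    (Ti : ℕ → Module.End K (LPn K n)) (Tn : Module.End K (LPn K n)) :
    Module.End K (LPn K n) :=
  (u * τ ^ (n - 1)) •
    (LinearMap.mulLeft K (Xv (⟨0, hn⟩ : Fin n)) ∘ₗ midChain τ (u * v) Ti Tn (n - 1))

section

variable {K : Type*} [Field K] {n : ℕ}

lemma Xv_mul_XvInv (i : Fin n) : (Xv i : LPn K n) * XvInv i = 1 := by
  rw [Xv, XvInv, of'_apply, of'_apply, single_mul_single]
  simp [← Pi.single_add, AddMonoidAlgebra.one_def]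

lemma Xv_sub_Xv_ne_zero {i j : Fin n} (h : i ≠ j) : (Xv i : LPn K n) - Xv j ≠ 0 := by
  rw [sub_ne_zero, Xv, Xv, of'_apply, of'_apply, Ne,
    AddMonoidAlgebra.single_left_inj one_ne_zero]
  intro hij
  simpa [h] using congrFun hij i

lemma swapAlg_XvInv (i j : Fin n) : swapAlg K i j (XvInv j) = XvInv i := by
  rw [XvInv, XvInv, swapAlg, of'_apply, of'_apply, AddMonoidAlgebra.domCongr_single]
  congr 1
  funext k
  simp [Pi.single_apply, Equiv.swap_apply_eq_iff]

def BernsteinRelation (τ : K) (S : Module.End K (LPn K n)) (a b : Fin n) : Prop :=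
  ∀ h x : LPn K n, (Xv a - Xv b) * (S (h * x) - swapAlg K a b h * S x)
    = (τ - 1) • (Xv a * ((h - swapAlg K a b h) * x))

variable {τ lam : K} {S : Module.End K (LPn K n)} {g : LPn K n}

lemma TInvA_apply_of_eigen (hS : S g = lam • g) :
    TInvA τ S g = (τ⁻¹ * (lam - (τ - 1))) • g := by
  simp only [TInvA, LinearMap.smul_apply, LinearMap.sub_apply, LinearMap.id_apply, hS,
    ← sub_smul, smul_smul]

lemma TInvA_XvInv_mul_of_eigen {a b : Fin n} (hab : a ≠ b) (hcomm : BernsteinRelation τ S a b)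
    (hS : S g = lam • g) :
    TInvA τ S (XvInv b * g) = (τ⁻¹ * lam) • (XvInv a * g) := by
  have hrel := hcomm (XvInv b) g
  rw [swapAlg_XvInv, hS,
    show Xv a * ((XvInv b - XvInv a) * g) = (Xv a - Xv b) * (XvInv b * g) by
      linear_combination g * Xv_mul_XvInv (K := K) b - g * Xv_mul_XvInv (K := K) a,
    ← mul_smul_comm] at hrel
  have hS_XvInv : S (XvInv b * g) = lam • (XvInv a * g) + (τ - 1) • (XvInv b * g) := by
    rw [← mul_smul_comm, ← sub_eq_iff_eq_add']
    exact mul_left_cancel₀ (Xv_sub_Xv_ne_zero hab) hrel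
  simp only [TInvA, LinearMap.smul_apply, LinearMap.sub_apply, LinearMap.id_apply,
    hS_XvInv, add_sub_cancel_right, smul_smul]

lemma TInvA_comp_comp_TInvA_apply {a b : Fin n} (hab : a ≠ b)
    (hquad : ∀ x, S (S x) = (τ - 1) • S x + τ • x) (hcomm : BernsteinRelation τ S a b)
    (hS : S g = lam • g) {M : Module.End K (LPn K n)} {c : K}
    (hM : M g = c • (XvInv b * g)) :
    (TInvA τ S ∘ₗ M ∘ₗ TInvA τ S) g = (τ⁻¹ * c) • (XvInv a * g) := by
  have hlam : ((lam - (τ - 1)) * lam) • g = τ • g := by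
    have := hquad g
    rw [hS, map_smul, hS] at this
    rw [mul_smul, sub_smul, this, add_sub_cancel_left]
  have hlam' : ((lam - (τ - 1)) * lam) • (XvInv a * g) = τ • (XvInv a * g) := by
    rw [← mul_smul_comm, hlam, mul_smul_comm]
  simp only [LinearMap.comp_apply, TInvA_apply_of_eigen hS, map_smul, hM,
    TInvA_XvInv_mul_of_eigen hab hcomm hS, smul_smul]
  rw [show τ⁻¹ * (lam - (τ - 1)) * c * (τ⁻¹ * lam) = τ⁻¹ * c * τ⁻¹ * ((lam - (τ - 1)) * lam)
    by ring, mul_smul, hlam', smul_smul]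
  congr 1
  rcases eq_or_ne τ 0 with rfl | hτ
  · simp
  · field_simp

lemma TInvC_apply_of_eq {Q w : K} {Tn : Module.End K (LPn K n)} {m : Fin n}
    (hTn : Tn g = ((Q - 1) • (1 : LPn K n) + w • XvInv m) * g) :
    TInvC Q Tn g = (Q⁻¹ * w) • (XvInv m * g) := by
  simp only [TInvC, LinearMap.smul_apply, LinearMap.sub_apply, LinearMap.id_apply, hTn,
    add_mul, smul_mul_assoc, one_mul, add_sub_cancel_left, smul_smul]

lemma midChain_apply (hn : 0 < n) {Q w : K} {Ti : ℕ → Module.End K (LPn K n)}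
    {Tn : Module.End K (LPn K n)}
    (hquad : ∀ i, 1 ≤ i → i ≤ n - 1 → ∀ x, Ti i (Ti i x) = (τ - 1) • Ti i x + τ • x)
    (hcomm : ∀ a b : Fin n, (a : ℕ) + 1 = b → BernsteinRelation τ (Ti b) a b)
    (heig : ∀ i, 1 ≤ i → i ≤ n - 1 → Ti i g = lam • g)
    (hTn : Tn g = ((Q - 1) • (1 : LPn K n) + w • XvInv ⟨n - 1, Nat.sub_one_lt hn.ne'⟩) * g) :
    ∀ j (hj : j ≤ n - 1), midChain τ Q Ti Tn j g
      = (τ⁻¹ ^ j * (Q⁻¹ * w)) • (XvInv ⟨n - 1 - j, by omega⟩ * g)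
  | 0, _ => by simpa [midChain] using TInvC_apply_of_eq hTn
  | j + 1, hj => by
    have hi : 1 ≤ n - 1 - j := by omega
    have hi' : n - 1 - j ≤ n - 1 := by omega
    have hab : (⟨n - 1 - j - 1, by omega⟩ : Fin n) ≠ ⟨n - 1 - j, by omega⟩ := by
      simp only [ne_eq, Fin.mk.injEq]; omega
    rw [midChain, TInvA_comp_comp_TInvA_apply hab (hquad _ hi hi')
      (hcomm _ _ (Nat.sub_add_cancel hi)) (heig _ hi hi')
      (midChain_apply hn hquad hcomm heig hTn j (by omega)), pow_succ', mul_assoc]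
    congr 3

end

/-- If `g` is a unit of `A = K[X₁^{±1},…,X_n^{±1}]` which is a common
eigenvector of `T₁,…,T_{n-1}` (with eigenvalue `λ`) and satisfies
`T_n(g) = (b + w·X_n⁻¹)·g` for some `w ∈ {u, −v}`, then `g` is an eigenvector
of `T₀` with eigenvalue `u·w·Q⁻¹`. -/
theorem statement16 {K : Type*} [Field K] {n : ℕ} (hn : 0 < n) (τ u v : K)
    (hτ : τ ≠ 0)
    (Ti : ℕ → Module.End K (LPn K n)) (Tn : Module.End K (LPn K n))
    (hquadA : ∀ i, 1 ≤ i → i ≤ n - 1 →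
      ∀ x, Ti i (Ti i x) = (τ - 1) • Ti i x + τ • x)
    (hcommA : ∀ i, ∀ _hi : 1 ≤ i, ∀ _hi' : i ≤ n - 1, ∀ h x : LPn K n,
      (Xv ⟨i - 1, by omega⟩ - Xv ⟨i, by omega⟩) *
          (Ti i (h * x) - swapAlg K ⟨i - 1, by omega⟩ ⟨i, by omega⟩ h * Ti i x)
        = (τ - 1) • (Xv ⟨i - 1, by omega⟩ *
            ((h - swapAlg K ⟨i - 1, by omega⟩ ⟨i, by omega⟩ h) * x)))
    (g : LPn K n) (lam : K)
    (heig : ∀ i, 1 ≤ i → i ≤ n - 1 → Ti i g = lam • g)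
    (w : K)
    (hTng : Tn g = ((u * v - 1) • (1 : LPn K n) + w • XvInv ⟨n - 1, by omega⟩) * g) :
    T0op hn τ u v Ti Tn g = (u * w * (u * v)⁻¹) • g := by
  have hcomm (a b : Fin n) (hab : (a : ℕ) + 1 = b) : BernsteinRelation τ (Ti b) a b := by
    obtain ⟨a, ha⟩ := a
    obtain ⟨b, hb⟩ := b
    obtain rfl : b = a + 1 := hab.symm
    exact hcommA (a + 1) (by omega) (by omega)
  have hchain := midChain_apply hn hquadA hcomm heig hTng (n - 1) le_rfl
  simp only [Nat.sub_self] at hchain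
  rw [T0op, LinearMap.smul_apply, LinearMap.comp_apply, LinearMap.mulLeft_apply, hchain,
    mul_smul_comm, ← mul_assoc (Xv _), Xv_mul_XvInv, one_mul, smul_smul]
  congr 1
  have hpow : τ ^ (n - 1) * τ⁻¹ ^ (n - 1) = 1 := by rw [← mul_pow, mul_inv_cancel₀ hτ, one_pow]
  linear_combination (u * w * (u * v)⁻¹) * hpow
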